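/- If ties are P-null at U, then the Legendre–Fenchel conjugate of g evaluated at the choice-probability vector p(U) satisfies g*(p(U)) := sup_{U' ∈ ℝ^A} ( Σ_{a∈A} p_a(U)·U'_a − g(U') ) = Σ_{a∈A} p_a(U)·U_a − g(U) = − ∫ ε_{a*(ε)} dP(ε); in particular the supremum defining the conjugate is attained at U' = U. -/

import Mathlib

/-! Under null ties the maximiser `a*(ε)` is a.s. the strict maximiser, so `p_a(U) = P(a* = a)`
and `Σ_a p_a(U) U'_a = E[U'_{a*}]`. Hence
`Σ_a p_a(U) U'_a - g(U') = E[U'_{a*} - max_b (U'_b + ε_b)] ≤ -E[ε_{a*}]`,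
with equality at `U' = U` because there `a*` attains the maximum. -/

open MeasureTheory

noncomputable section

variable {A : Type*} [Fintype A] [Nonempty A]

/-- The expected-maximum (social surplus) function
`g(U) = ∫ max_{a ∈ A} (U_a + ε_a) dP(ε)`. -/
def gfun (P : Measure (A → ℝ)) (U : A → ℝ) : ℝ :=
  ∫ ε, (Finset.univ.sup' Finset.univ_nonempty fun a => U a + ε a) ∂P

/-- The choice probability `p_a(U) = P({ε : U_a + ε_a > U_b + ε_b for all b ≠ a})`. -/
def choiceProb (P : Measure (A → ℝ)) (U : A → ℝ) (a : A) : ℝ :=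
  (P {ε | ∀ b, b ≠ a → U b + ε b < U a + ε a}).toReal

/-- `P` has full support: every nonempty open set has positive measure. -/
def FullSupport (P : Measure (A → ℝ)) : Prop :=
  ∀ s : Set (A → ℝ), IsOpen s → s.Nonempty → 0 < P s

/-- Ties are `P`-null at `U`: the event that the maximum of `a ↦ U_a + ε_a`
is attained at more than one alternative has probability zero. -/
def TiesNull (P : Measure (A → ℝ)) (U : A → ℝ) : Prop :=
  P {ε | ∃ a b : A, a ≠ b ∧ (∀ c, U c + ε c ≤ U a + ε a) ∧ (∀ c, U c + ε c ≤ U b + ε b)} = 0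

open Function

namespace MeasureTheory.Integrable

theorem finset_sup'_apply {α ι : Type*} [MeasurableSpace α] {μ : Measure α}
    {s : Finset ι} (hs : s.Nonempty) {f : ι → α → ℝ} (hf : ∀ i ∈ s, Integrable (f i) μ) :
    Integrable (fun x => s.sup' hs fun i => f i x) μ := by
  simpa only [← Finset.sup'_apply] using
    Finset.sup'_induction (p := fun g => Integrable g μ) hs f (fun _ h₁ _ h₂ => h₁.sup h₂) hf

theorem apply_of_sup'_abs {ι : Type*} [Fintype ι] [Nonempty ι] {μ : Measure (ι → ℝ)}
    (h : Integrable (fun ε : ι → ℝ => Finset.univ.sup' Finset.univ_nonempty fun i => |ε i|) μ)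
    (i : ι) : Integrable (fun ε : ι → ℝ => ε i) μ :=
  h.mono (measurable_pi_apply i).aestronglyMeasurable <| ae_of_all _ fun ε => by
    simpa only [Real.norm_eq_abs, abs_abs] using
      (Finset.le_sup' (fun j => |ε j|) (Finset.mem_univ i)).trans (le_abs_self _)

end MeasureTheory.Integrable

section Selection

variable {Ω ι : Type*} [MeasurableSpace Ω] [Fintype ι] {μ : Measure Ω}
  {S : ι → Set Ω} {σ : Ω → ι}

/-- Lets one integrate `ω ↦ f (σ ω) ω` without `σ` being measurable. -/
theorem ae_eq_sum_indicator_of_ae_mem (hS : Pairwise (Disjoint on S))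
    (hσ : ∀ᵐ ω ∂μ, ω ∈ S (σ ω)) {E : Type*} [AddCommMonoid E] (f : ι → Ω → E) :
    (fun ω => f (σ ω) ω) =ᵐ[μ] fun ω => ∑ i, (S i).indicator (f i) ω := by
  filter_upwards [hσ] with ω hω
  rw [Finset.sum_eq_single_of_mem (σ ω) (Finset.mem_univ _), Set.indicator_of_mem hω]
  exact fun i _ hi => Set.indicator_of_notMem
    (fun hi' => Set.disjoint_left.1 (hS (Ne.symm hi)) hω hi') _

theorem integrable_comp_of_ae_mem (hS : Pairwise (Disjoint on S))
    (hSm : ∀ i, MeasurableSet (S i)) (hσ : ∀ᵐ ω ∂μ, ω ∈ S (σ ω)) {f : ι → Ω → ℝ}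
    (hf : ∀ i, Integrable (f i) μ) : Integrable (fun ω => f (σ ω) ω) μ :=
  (integrable_finsetSum _ fun i _ => (hf i).indicator (hSm i)).congr
    (ae_eq_sum_indicator_of_ae_mem hS hσ f).symm

theorem integral_comp_of_ae_mem (hS : Pairwise (Disjoint on S))
    (hSm : ∀ i, MeasurableSet (S i)) (hσ : ∀ᵐ ω ∂μ, ω ∈ S (σ ω)) {f : ι → Ω → ℝ}
    (hf : ∀ i, Integrable (f i) μ) :
    ∫ ω, f (σ ω) ω ∂μ = ∑ i, ∫ ω in S i, f i ω ∂μ := by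
  rw [integral_congr_ae (ae_eq_sum_indicator_of_ae_mem hS hσ f),
    integral_finsetSum _ fun i _ => (hf i).indicator (hSm i)]
  exact Finset.sum_congr rfl fun i _ => integral_indicator (hSm i)

end Selection

section StrictArgmax

variable {ι : Type*}

def strictArgmaxSet (U : ι → ℝ) (i : ι) : Set (ι → ℝ) :=
  {ε | ∀ j, j ≠ i → U j + ε j < U i + ε i}

theorem pairwise_disjoint_strictArgmaxSet (U : ι → ℝ) :
    Pairwise (Disjoint on strictArgmaxSet U) := fun i j hij =>
  Set.disjoint_left.2 fun _ hi hj => lt_asymm (hi j hij.symm) (hj i hij)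

theorem measurableSet_strictArgmaxSet [Countable ι] (U : ι → ℝ) (i : ι) :
    MeasurableSet (strictArgmaxSet U i) := by
  simp only [strictArgmaxSet, Set.ofPred_forall]
  exact .iInter fun j => .iInter fun _ => measurableSet_lt (by fun_prop) (by fun_prop)

end StrictArgmax

section Conjugate

variable {ι : Type*} {P : Measure (ι → ℝ)} {U : ι → ℝ} {astar : (ι → ℝ) → ι}

theorem ae_mem_strictArgmaxSet (hties : TiesNull P U)
    (hastar : ∀ᵐ ε ∂P, ∀ b, U b + ε b ≤ U (astar ε) + ε (astar ε)) :
    ∀ᵐ ε ∂P, ε ∈ strictArgmaxSet U (astar ε) := by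
  filter_upwards [hastar, measure_eq_zero_iff_ae_notMem.1 hties] with ε hmax hnotie b hb
  refine (hmax b).lt_of_ne fun heq => hnotie ⟨astar ε, b, hb.symm, hmax, fun c => ?_⟩
  exact (hmax c).trans heq.ge

variable [Fintype ι]

theorem integrable_comp_astar (hastar : ∀ᵐ ε ∂P, ε ∈ strictArgmaxSet U (astar ε))
    {f : ι → (ι → ℝ) → ℝ} (hf : ∀ i, Integrable (f i) P) :
    Integrable (fun ε => f (astar ε) ε) P :=
  integrable_comp_of_ae_mem (pairwise_disjoint_strictArgmaxSet U)
    (measurableSet_strictArgmaxSet U) hastar hf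

variable [IsFiniteMeasure P]

theorem sum_choiceProb_mul_eq_integral (hastar : ∀ᵐ ε ∂P, ε ∈ strictArgmaxSet U (astar ε))
    (V : ι → ℝ) : ∑ i, choiceProb P U i * V i = ∫ ε, V (astar ε) ∂P := by
  rw [integral_comp_of_ae_mem (pairwise_disjoint_strictArgmaxSet U)
    (measurableSet_strictArgmaxSet U) hastar (f := fun i _ => V i) fun i => integrable_const _]
  simp only [setIntegral_const, smul_eq_mul]
  rfl

variable [Nonempty ι]

theorem integrable_sup'_add
    (hint : Integrable (fun ε : ι → ℝ => Finset.univ.sup' Finset.univ_nonempty fun i => |ε i|) P)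
    (V : ι → ℝ) :
    Integrable (fun ε => Finset.univ.sup' Finset.univ_nonempty fun i => V i + ε i) P :=
  Integrable.finset_sup'_apply _ fun i _ => (integrable_const _).add (hint.apply_of_sup'_abs i)

theorem sum_choiceProb_mul_sub_gfun_eq_integral
    (hint : Integrable (fun ε : ι → ℝ => Finset.univ.sup' Finset.univ_nonempty fun i => |ε i|) P)
    (hastar : ∀ᵐ ε ∂P, ε ∈ strictArgmaxSet U (astar ε)) (V : ι → ℝ) :
    ∑ i, choiceProb P U i * V i - gfun P V =
      ∫ ε, (V (astar ε) - Finset.univ.sup' Finset.univ_nonempty fun i => V i + ε i) ∂P := by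
  rw [sum_choiceProb_mul_eq_integral hastar, gfun,
    integral_sub (integrable_comp_astar hastar fun i => integrable_const (V i))
      (integrable_sup'_add hint V)]

theorem sum_choiceProb_mul_sub_gfun_le
    (hint : Integrable (fun ε : ι → ℝ => Finset.univ.sup' Finset.univ_nonempty fun i => |ε i|) P)
    (hastar : ∀ᵐ ε ∂P, ε ∈ strictArgmaxSet U (astar ε)) (V : ι → ℝ) :
    ∑ i, choiceProb P U i * V i - gfun P V ≤ -∫ ε, ε (astar ε) ∂P := by
  rw [sum_choiceProb_mul_sub_gfun_eq_integral hint hastar, ← integral_neg]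
  refine integral_mono ?_ ?_ fun ε => ?_
  · exact (integrable_comp_astar hastar fun i => integrable_const (V i)).sub
      (integrable_sup'_add hint V)
  · exact (integrable_comp_astar hastar hint.apply_of_sup'_abs).neg
  · have := Finset.le_sup' (fun i => V i + ε i) (Finset.mem_univ (astar ε))
    linarith

theorem sum_choiceProb_mul_sub_gfun_self
    (hint : Integrable (fun ε : ι → ℝ => Finset.univ.sup' Finset.univ_nonempty fun i => |ε i|) P)
    (hastar : ∀ᵐ ε ∂P, ε ∈ strictArgmaxSet U (astar ε))
    (hmax : ∀ᵐ ε ∂P, ∀ j, U j + ε j ≤ U (astar ε) + ε (astar ε)) :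
    ∑ i, choiceProb P U i * U i - gfun P U = -∫ ε, ε (astar ε) ∂P := by
  rw [sum_choiceProb_mul_sub_gfun_eq_integral hint hastar, ← integral_neg]
  refine integral_congr_ae ?_
  filter_upwards [hmax] with ε hε
  rw [le_antisymm (Finset.sup'_le _ _ fun j _ => hε j)
    (Finset.le_sup' (fun j => U j + ε j) (Finset.mem_univ _))]
  ring

end Conjugate

/-- If ties are `P`-null at `U`, the Legendre–Fenchel conjugate of `g`
at the choice-probability vector `p(U)` equals `Σ_a p_a(U)·U_a − g(U)`, which equals
`−∫ ε_{a*(ε)} dP(ε)`; the supremum defining the conjugate is attained at `U' = U`. -/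
theorem stmt8 (P : Measure (A → ℝ)) [IsProbabilityMeasure P]
    (hint : Integrable (fun ε : A → ℝ =>
      Finset.univ.sup' Finset.univ_nonempty fun a => |ε a|) P)
    (U : A → ℝ) (hties : TiesNull P U)
    (astar : (A → ℝ) → A)
    (hastar : ∀ᵐ ε ∂P, ∀ b, U b + ε b ≤ U (astar ε) + ε (astar ε)) :
    (∀ U' : A → ℝ,
      ∑ a, choiceProb P U a * U' a - gfun P U' ≤ ∑ a, choiceProb P U a * U a - gfun P U) ∧
    (⨆ U' : A → ℝ, (∑ a, choiceProb P U a * U' a - gfun P U'))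
      = ∑ a, choiceProb P U a * U a - gfun P U ∧
    ∑ a, choiceProb P U a * U a - gfun P U = -∫ ε, ε (astar ε) ∂P := by
  have hstrict := ae_mem_strictArgmaxSet hties hastar
  have hself := sum_choiceProb_mul_sub_gfun_self hint hstrict hastar
  have hle : ∀ U' : A → ℝ,
      ∑ a, choiceProb P U a * U' a - gfun P U' ≤ ∑ a, choiceProb P U a * U a - gfun P U :=
    fun U' => hself ▸ sum_choiceProb_mul_sub_gfun_le hint hstrict U'
  exact ⟨hle, ciSup_eq_of_forall_le_of_forall_lt_exists_gt hle fun _ h => ⟨U, h⟩, hself⟩
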